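/- arXiv:2009.09297 — 2 statements merged into one kernel-verified Lean document; each statement's English description precedes it below -/
import Mathlib

section
/- Let G be a Frattini-injective pro-p group. If G is virtually abelian (contains an abelian open subgroup of finite index), then G is abelian. -/
/-- A pro-`p` group: a compact Hausdorff totally disconnected topological group in which
every open normal subgroup has index a power of `p`. -/
def IsProPGroup (p : ℕ) (G : Type*) [Group G] [TopologicalSpace G] [IsTopologicalGroup G] : Prop :=
  CompactSpace G ∧ T2Space G ∧ TotallyDisconnectedSpace G ∧
    ∀ U : Subgroup G, U.Normal → IsOpen (U : Set G) → ∃ n : ℕ, U.index = p ^ n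

/-- The Frattini subgroup of a subgroup `H` of `G`, viewed as a subgroup of `G`:
the intersection of all maximal open subgroups of `H` (taken inside `H`), mapped into `G`. -/
def frattiniOf {G : Type*} [Group G] [TopologicalSpace G] (H : Subgroup G) : Subgroup G :=
  (⨅ M ∈ {M : Subgroup ↥H | IsOpen (M : Set ↥H) ∧ IsCoatom M}, M).map H.subtype

/-- `H` is topologically finitely generated. -/
def TopFG {G : Type*} [Group G] [TopologicalSpace G] [IsTopologicalGroup G] (H : Subgroup G) : Prop :=
  ∃ S : Finset G, (Subgroup.closure (S : Set G)).topologicalClosure = H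

/-- The minimal number of topological generators of `H`. -/
noncomputable def genNum {G : Type*} [Group G] [TopologicalSpace G] [IsTopologicalGroup G]
    (H : Subgroup G) : ℕ :=
  sInf {n | ∃ S : Finset G, S.card = n ∧ (Subgroup.closure (S : Set G)).topologicalClosure = H}

/-- `G` is Frattini-injective: distinct finitely generated closed subgroups have
distinct Frattini subgroups. -/
def FrattiniInjective (G : Type*) [Group G] [TopologicalSpace G] [IsTopologicalGroup G] : Prop :=
  ∀ H K : Subgroup G, IsClosed (H : Set G) → IsClosed (K : Set G) → TopFG H → TopFG K →
    frattiniOf H = frattiniOf K → H = K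

/-- `(G, K, H)` is a hierarchical triple: `x ^ p ∈ H` implies `x ∈ K`. -/
def Hierarchical (p : ℕ) {G : Type*} [Group G] (K H : Subgroup G) : Prop :=
  ∀ x : G, x ^ p ∈ H → x ∈ K

/-- `G` is Frattini-resistant: `(G, H, Φ(H))` is hierarchical for every finitely generated
closed subgroup `H`. -/
def FrattiniResistant (p : ℕ) (G : Type*) [Group G] [TopologicalSpace G] [IsTopologicalGroup G] :
    Prop :=
  ∀ H : Subgroup G, IsClosed (H : Set G) → TopFG H → Hierarchical p H (frattiniOf H)

/-- The closed commutator subgroup of `H`, as a subgroup of the ambient group. -/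
def commClosure {G : Type*} [Group G] [TopologicalSpace G] [IsTopologicalGroup G]
    (H : Subgroup G) : Subgroup G :=
  (⁅H, H⁆ : Subgroup G).topologicalClosure

/-!
In a pro-`p` group the closed procyclic subgroup `⟨x⟩‾` has Frattini subgroup `⟨x^p⟩‾`: the
abelian pro-`p` group `⟨x⟩‾` has all its open maximal subgroups of index `p`, so they contain
`x^p`, while `⟨x^p⟩‾` has index dividing `p`, hence is `⟨x⟩‾` or an open maximal subgroup.
Frattini-injectivity therefore turns `x^p = y^p` into `⟨x⟩‾ = ⟨y⟩‾`; then `x` and `y` commute,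
`(x⁻¹y)^p = 1^p` gives `⟨x⁻¹y⟩‾ = 1`, and so `x ↦ x^p` is injective.

Let `N` be an abelian open normal subgroup, of index `p^n`, so that every `g^(p^n)` lies in `N`.
With `x ↦ x^(p^n)` injective, `a` commutes with `g` as soon as it commutes with `g^(p^n)`
(conjugation by `a` fixes `g^(p^n)`). This makes `N` central, and then `G` abelian.
-/

open Subgroup

instance QuotientGroup.isMulCommutative {K : Type*} [Group K] [IsMulCommutative K]
    (M : Subgroup K) : IsMulCommutative (K ⧸ M) :=
  .of_comm <| by
    rintro ⟨a⟩ ⟨b⟩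
    exact congrArg (QuotientGroup.mk (s := M)) (mul_comm' a b)

theorem Subgroup.isCoatom_iff_isSimpleGroup_quotient {K : Type*} [Group K] [IsMulCommutative K]
    (M : Subgroup K) : IsCoatom M ↔ IsSimpleGroup (K ⧸ M) := by
  rw [← Set.isSimpleOrder_Ici_iff_isCoatom,
    ← @OrderIso.isSimpleOrder_iff (Subgroup (K ⧸ M)) (Set.Ici M) _ _ _ _
      (QuotientGroup.comapMk'OrderIso M)]
  constructor
  · intro h
    have : Nontrivial (K ⧸ M) := Subgroup.nontrivial_iff.mp inferInstance
    exact ⟨fun H _ => h.eq_bot_or_eq_top H⟩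
  · intro h
    exact ⟨fun H => (H.normal_of_isMulCommutative).eq_bot_or_eq_top⟩

theorem Subgroup.isCoatom_iff_prime_index {K : Type*} [Group K] [IsMulCommutative K]
    (M : Subgroup K) : IsCoatom M ↔ M.index.Prime :=
  M.isCoatom_iff_isSimpleGroup_quotient.trans Group.is_simple_iff_prime_card

theorem Commute.of_pow_right_of_injective {G : Type*} [Group G] {m : ℕ}
    (hinj : Function.Injective (fun x : G => x ^ m)) {a b : G} (h : Commute a (b ^ m)) :
    Commute a b :=
  mul_inv_eq_iff_eq_mul.mp <| hinj (show (a * b * a⁻¹) ^ m = b ^ m by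
    rw [conj_pow, h.eq, mul_inv_cancel_right])

theorem commute_of_pow_injective_of_pow_mem {G : Type*} [Group G] {m : ℕ}
    (hinj : Function.Injective (fun x : G => x ^ m)) {N : Subgroup G} [IsMulCommutative N]
    (hN : ∀ g, g ^ m ∈ N) (a b : G) : Commute a b :=
  have hcentral : ∀ c ∈ N, ∀ g, Commute c g := fun _ hc g =>
    Commute.of_pow_right_of_injective hinj (setLike_mul_comm hc (hN g))
  (Commute.of_pow_right_of_injective hinj (hcentral _ (hN a) b).symm).symm

instance Subgroup.isMulCommutative_topologicalClosure {G : Type*} [Group G] [TopologicalSpace G]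
    [IsTopologicalGroup G] [T2Space G] (s : Subgroup G) [IsMulCommutative s] :
    IsMulCommutative s.topologicalClosure :=
  .of_comm (s.commGroupTopologicalClosure fun a b => mul_comm' a b).mul_comm

section ClosedZPowers

variable {G : Type*} [Group G] [TopologicalSpace G] [IsTopologicalGroup G]

def closedZPowers (x : G) : Subgroup G := (zpowers x).topologicalClosure

theorem isClosed_closedZPowers (x : G) : IsClosed (closedZPowers x : Set G) :=
  isClosed_topologicalClosure _

theorem mem_closedZPowers_self (x : G) : x ∈ closedZPowers x :=
  le_topologicalClosure _ (mem_zpowers x)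

theorem closedZPowers_le {x : G} {H : Subgroup G} (hH : IsClosed (H : Set G)) (hx : x ∈ H) :
    closedZPowers x ≤ H :=
  topologicalClosure_minimal _ (zpowers_le.mpr hx) hH

theorem topFG_closedZPowers (x : G) : TopFG (closedZPowers x) :=
  ⟨{x}, by rw [Finset.coe_singleton, ← zpowers_eq_closure]; rfl⟩

theorem closedZPowers_pow_le (x : G) (n : ℕ) : closedZPowers (x ^ n) ≤ closedZPowers x :=
  closedZPowers_le (isClosed_closedZPowers x) (pow_mem (mem_closedZPowers_self x) n)

instance [T2Space G] (x : G) : IsMulCommutative (closedZPowers x) :=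
  isMulCommutative_topologicalClosure _

theorem closedZPowers_one [T1Space G] : closedZPowers (1 : G) = ⊥ :=
  le_bot_iff.mp <| closedZPowers_le (by simp) (one_mem _)

open Pointwise in
theorem exists_inv_pow_mul_mem_closedZPowers_pow {x g : G} {n : ℕ} (hn : n ≠ 0)
    (hg : g ∈ closedZPowers x) : ∃ i < n, (x ^ i)⁻¹ * g ∈ closedZPowers (x ^ n) := by
  set S := ⋃ i ∈ Finset.range n, x ^ i • (closedZPowers (x ^ n) : Set G)
  have hS : IsClosed S := isClosed_biUnion_finset fun i _ => (isClosed_closedZPowers _).smul _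
  have hzpowers : (zpowers x : Set G) ⊆ S := by
    rintro _ ⟨m, rfl⟩
    have hn' : (0 : ℤ) < n := by omega
    obtain ⟨k, hk⟩ := Int.eq_ofNat_of_zero_le (Int.emod_nonneg m hn'.ne')
    have hkn : k < n := by have := Int.emod_lt_of_pos m hn'; omega
    refine Set.mem_biUnion (Finset.mem_range.mpr hkn) ?_
    have hdiv : (x ^ k)⁻¹ * x ^ m = (x ^ n) ^ (m / n) := by
      rw [← zpow_natCast, ← zpow_natCast, ← zpow_neg, ← zpow_add, ← zpow_mul]
      have := Int.emod_add_mul_ediv m n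
      congr 1
      omega
    rw [Set.mem_smul_set_iff_inv_smul_mem, smul_eq_mul]
    exact hdiv ▸ zpow_mem (mem_closedZPowers_self _) _
  obtain ⟨i, hi, hgi⟩ := Set.mem_iUnion₂.mp (hS.closure_subset_iff.mpr hzpowers hg)
  exact ⟨i, Finset.mem_range.mp hi, Set.mem_smul_set_iff_inv_smul_mem.mp hgi⟩

variable [T2Space G]

theorem index_subgroupOf_closedZPowers_pow_dvd (x : G) {n : ℕ} (hn : n ≠ 0) :
    ((closedZPowers (x ^ n)).subgroupOf (closedZPowers x)).index ∣ n := by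
  set M := (closedZPowers (x ^ n)).subgroupOf (closedZPowers x)
  set xbar : closedZPowers x ⧸ M := QuotientGroup.mk ⟨x, mem_closedZPowers_self x⟩
  have hgen : ∀ q : closedZPowers x ⧸ M, q ∈ zpowers xbar := by
    rintro ⟨g⟩
    obtain ⟨i, -, hi⟩ := exists_inv_pow_mul_mem_closedZPowers_pow hn g.2
    exact ⟨i, QuotientGroup.eq.mpr (mem_subgroupOf.mpr (by simpa using hi))⟩
  rw [index, ← orderOf_eq_card_of_forall_mem_zpowers hgen]
  exact orderOf_dvd_of_pow_eq_one <| (QuotientGroup.eq_one_iff _).mpr <|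
    mem_subgroupOf.mpr (mem_closedZPowers_self (x ^ n))

theorem isOpen_subgroupOf_closedZPowers_pow (x : G) {n : ℕ} (hn : n ≠ 0) :
    IsOpen ((closedZPowers (x ^ n)).subgroupOf (closedZPowers x) : Set (closedZPowers x)) :=
  have : ((closedZPowers (x ^ n)).subgroupOf (closedZPowers x)).FiniteIndex :=
    ⟨ne_zero_of_dvd_ne_zero hn (index_subgroupOf_closedZPowers_pow_dvd x hn)⟩
  isOpen_of_isClosed_of_finiteIndex _ ((isClosed_closedZPowers _).preimage continuous_subtype_val)

theorem isCoatom_subgroupOf_closedZPowers_pow {p : ℕ} (hp : p.Prime) {x : G}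
    (hx : ¬ closedZPowers x ≤ closedZPowers (x ^ p)) :
    IsCoatom ((closedZPowers (x ^ p)).subgroupOf (closedZPowers x)) := by
  rw [isCoatom_iff_prime_index]
  rcases (Nat.dvd_prime hp).mp (index_subgroupOf_closedZPowers_pow_dvd x hp.ne_zero) with h | h
  · exact absurd (subgroupOf_eq_top.mp (index_eq_one.mp h)) hx
  · rwa [h]

end ClosedZPowers

section FrattiniOf

variable {G : Type*} [Group G] [TopologicalSpace G]

theorem frattiniOf_le_map_of_isCoatom {H : Subgroup G} {M : Subgroup H}
    (hMo : IsOpen (M : Set H)) (hM : IsCoatom M) : frattiniOf H ≤ M.map H.subtype :=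
  map_mono (iInf₂_le M ⟨hMo, hM⟩)

theorem mem_frattiniOf {H : Subgroup G} {g : G} (hg : g ∈ H)
    (h : ∀ M : Subgroup H, IsOpen (M : Set H) → IsCoatom M → ⟨g, hg⟩ ∈ M) : g ∈ frattiniOf H :=
  mem_map.mpr ⟨⟨g, hg⟩, mem_iInf.mpr fun M => mem_iInf.mpr fun hM => h M hM.1 hM.2, rfl⟩

end FrattiniOf

section ProP

variable {p : ℕ} {G : Type*} [Group G] [TopologicalSpace G] [IsTopologicalGroup G]

theorem IsProPGroup.exists_index_eq_pow (hp : p.Prime) (hG : IsProPGroup p G) {H : Subgroup G}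
    {M : Subgroup H} (hM : IsOpen (M : Set H)) : ∃ k, M.index = p ^ k := by
  obtain ⟨_, _, _, hindex⟩ := hG
  obtain ⟨V, hV, hVM⟩ := isOpen_induced_iff.mp hM
  have h1V : (1 : G) ∈ V := show (1 : H) ∈ Subtype.val ⁻¹' V from hVM ▸ M.one_mem
  obtain ⟨W, hWV⟩ := ProfiniteGrp.exist_openNormalSubgroup_sub_open_nhds_of_one hV h1V
  obtain ⟨n, hn⟩ := hindex W W.isNormal' W.isOpen
  have hWM : (W : Subgroup G).subgroupOf H ≤ M := fun h hh =>
    show h ∈ (M : Set H) from hVM ▸ hWV hh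
  obtain ⟨k, -, hk⟩ := (Nat.dvd_prime_pow hp).mp <| (index_dvd_of_le hWM).trans <|
    hn ▸ relIndex_dvd_index_of_normal (W : Subgroup G) H
  exact ⟨k, hk⟩

theorem IsProPGroup.pow_mem_of_isCoatom (hp : p.Prime) (hG : IsProPGroup p G) {H : Subgroup G}
    [IsMulCommutative H] {M : Subgroup H} (hMo : IsOpen (M : Set H)) (hM : IsCoatom M) (a : H) :
    a ^ p ∈ M := by
  obtain ⟨k, hk⟩ := hG.exists_index_eq_pow hp hMo
  have hprime := (isCoatom_iff_prime_index M).mp hM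
  rw [hk] at hprime
  rw [← pow_one p, ← hprime.eq_one_of_pow, ← hk]
  exact M.pow_index_mem a

theorem IsProPGroup.frattiniOf_closedZPowers (hp : p.Prime) (hG : IsProPGroup p G) (x : G) :
    frattiniOf (closedZPowers x) = closedZPowers (x ^ p) := by
  have : T2Space G := hG.2.1
  apply le_antisymm
  · by_cases hx : closedZPowers x ≤ closedZPowers (x ^ p)
    · exact (map_subtype_le _).trans hx
    calc frattiniOf (closedZPowers x)
        ≤ ((closedZPowers (x ^ p)).subgroupOf (closedZPowers x)).map (closedZPowers x).subtype :=
          frattiniOf_le_map_of_isCoatom (isOpen_subgroupOf_closedZPowers_pow x hp.ne_zero)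
            (isCoatom_subgroupOf_closedZPowers_pow hp hx)
      _ = closedZPowers (x ^ p) ⊓ closedZPowers x := subgroupOf_map_subtype _ _
      _ ≤ closedZPowers (x ^ p) := inf_le_left
  · intro g hg
    refine mem_frattiniOf (closedZPowers_pow_le x p hg) fun M hMo hM => ?_
    have hMclosed : IsClosed (M.map (closedZPowers x).subtype : Set G) :=
      (isClosed_closedZPowers x).isClosedMap_subtype_val _ (M.isClosed_of_isOpen hMo)
    have hxp : x ^ p ∈ M.map (closedZPowers x).subtype :=
      ⟨_, hG.pow_mem_of_isCoatom hp hMo hM ⟨x, mem_closedZPowers_self x⟩, rfl⟩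
    exact (mem_map_iff_mem (subtype_injective _)).mp (closedZPowers_le hMclosed hxp hg)

theorem FrattiniInjective.closedZPowers_eq_of_pow_eq (hFI : FrattiniInjective G) (hp : p.Prime)
    (hG : IsProPGroup p G) {x y : G} (h : x ^ p = y ^ p) : closedZPowers x = closedZPowers y :=
  hFI _ _ (isClosed_closedZPowers x) (isClosed_closedZPowers y) (topFG_closedZPowers x)
    (topFG_closedZPowers y)
    (by rw [hG.frattiniOf_closedZPowers hp, hG.frattiniOf_closedZPowers hp, h])

theorem FrattiniInjective.pow_injective (hFI : FrattiniInjective G) (hp : p.Prime)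
    (hG : IsProPGroup p G) : Function.Injective (fun x : G => x ^ p) := by
  have : T2Space G := hG.2.1
  intro x y (h : x ^ p = y ^ p)
  have hxy : Commute x y := setLike_mul_comm (mem_closedZPowers_self x)
    (hFI.closedZPowers_eq_of_pow_eq hp hG h ▸ mem_closedZPowers_self y)
  have htorsion : (x⁻¹ * y) ^ p = 1 ^ p := by
    rw [hxy.inv_left.mul_pow, inv_pow, h, inv_mul_cancel, one_pow]
  have := hFI.closedZPowers_eq_of_pow_eq hp hG htorsion ▸ mem_closedZPowers_self (x⁻¹ * y)
  rwa [closedZPowers_one, mem_bot, inv_mul_eq_one] at this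

theorem FrattiniInjective.pow_prime_pow_injective (hFI : FrattiniInjective G) (hp : p.Prime)
    (hG : IsProPGroup p G) (n : ℕ) : Function.Injective (fun x : G => x ^ p ^ n) :=
  pow_iterate (M := G) p n ▸ (hFI.pow_injective hp hG).iterate n

end ProP

/-- A virtually abelian Frattini-injective pro-`p` group is abelian. -/
theorem stmt_3 {p : ℕ} (hp : p.Prime) (G : Type*) [Group G] [TopologicalSpace G]
    [IsTopologicalGroup G] (hG : IsProPGroup p G) (hFI : FrattiniInjective G)
    (hva : ∃ U : Subgroup G, IsOpen (U : Set G) ∧ U.index ≠ 0 ∧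
      ∀ a ∈ U, ∀ b ∈ U, a * b = b * a) :
    ∀ a b : G, a * b = b * a := by
  obtain ⟨U, hUo, hUidx, hUcomm⟩ := hva
  have : U.FiniteIndex := ⟨hUidx⟩
  have : IsMulCommutative U.normalCore := .of_setLike_mul_comm fun a ha b hb =>
    hUcomm a (U.normalCore_le ha) b (U.normalCore_le hb)
  obtain ⟨n, hn⟩ := hG.2.2.2 U.normalCore inferInstance <| isOpen_of_isClosed_of_finiteIndex _
    (U.normalCore_isClosed (U.isClosed_of_isOpen hUo))
  exact commute_of_pow_injective_of_pow_mem (hFI.pow_prime_pow_injective hp hG n)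
    (fun g => hn ▸ U.normalCore.pow_index_mem g)
end

section
/- Every finitely generated Frattini-resistant pro-p group is strongly Frattini-resistant. -/
/-!
A closed subgroup `H` of a profinite group is the intersection of the open subgroups `U ≥ H`, and
open subgroups of a finitely generated profinite group are finitely generated, so it suffices to
show `Φ(H) ≤ Φ(U)` and apply Frattini resistance to `U`. An open maximal subgroup `N` of `U`
contains an open normal subgroup of `G` with `p`-group quotient, hence is normal of index `p`;
so either `H ≤ N`, or `N ∩ H` has index `p` in `H` and is an open maximal subgroup of `H`.
-/

namespace Subgroup

variable {G : Type*} [Group G]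

theorem isCoatom_of_index_prime {M : Subgroup G} (h : M.index.Prime) : IsCoatom M := by
  refine ⟨fun hM => by simp [hM, Nat.not_prime_one] at h, fun K hK => ?_⟩
  have hmul := relIndex_mul_index hK.le
  rcases h.eq_one_or_self_of_dvd _ (Dvd.intro_left _ hmul) with hK1 | hKM
  · exact index_eq_one.mp hK1
  · rw [hKM, Nat.mul_eq_right h.ne_zero] at hmul
    exact absurd (relIndex_eq_one.mp hmul) hK.not_ge

theorem isCoatom_map_of_ker_le {H : Type*} [Group H] {f : G →* H} (hf : Function.Surjective f)
    {M : Subgroup G} (hker : f.ker ≤ M) (hM : IsCoatom M) : IsCoatom (M.map f) := by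
  refine ⟨fun htop => hM.1 ?_, fun K hK => ?_⟩
  · rw [← comap_map_eq_self hker, htop, comap_top]
  · rw [← comap_lt_comap_of_surjective hf, comap_map_eq_self hker] at hK
    rw [← map_comap_eq_self_of_surjective hf K, hM.2 _ hK, map_top_of_surjective f hf]

end Subgroup

namespace IsPGroup

variable {p : ℕ} [Fact p.Prime] {P : Type*} [Group P] [Finite P]

theorem normal_of_isCoatom (hP : IsPGroup p P) {M : Subgroup P} (hM : IsCoatom M) : M.Normal :=
  have := hP.isNilpotent
  Subgroup.NormalizerCondition.normal_of_coatom M Group.normalizerCondition_of_isNilpotent hM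

theorem index_eq_of_isCoatom (hP : IsPGroup p P) {M : Subgroup P} (hM : IsCoatom M) :
    M.index = p := by
  have hp : p.Prime := Fact.out
  obtain ⟨m, hm⟩ := IsPGroup.iff_card.mp hP
  obtain ⟨n, hn⟩ := IsPGroup.iff_card.mp (hP.to_subgroup M)
  have hnm : n < m := by
    by_contra! hmn
    exact hM.1 (M.eq_top_of_le_card (by rw [hm, hn]; exact Nat.pow_le_pow_right hp.pos hmn))
  obtain ⟨K, hK, hMK⟩ := Sylow.exists_subgroup_card_pow_succ
    (hm ▸ pow_dvd_pow p hnm : p ^ (n + 1) ∣ Nat.card P) hn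
  have hKtop : K = ⊤ := hM.2 K <| hMK.lt_of_ne <| by
    rintro rfl
    exact (Nat.pow_lt_pow_right hp.one_lt n.lt_succ_self).ne (hn.symm.trans hK)
  have := M.card_mul_index
  rw [← Subgroup.card_top (G := P), ← hKtop, hK, hn, pow_succ] at this
  exact Nat.eq_of_mul_eq_mul_left (pow_pos hp.pos n) this

theorem normal_and_index_eq_of_isCoatom_of_le {G : Type*} [Group G] {V : Subgroup G} [V.Normal]
    [Finite (G ⧸ V)] (hQ : IsPGroup p (G ⧸ V)) {N : Subgroup G}
    (hVN : V ≤ N) (hN : IsCoatom N) : N.Normal ∧ N.index = p := by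
  have hker : (QuotientGroup.mk' V).ker ≤ N := by rwa [QuotientGroup.ker_mk']
  have hcomap : (N.map (QuotientGroup.mk' V)).comap (QuotientGroup.mk' V) = N :=
    Subgroup.comap_map_eq_self hker
  have hmax := Subgroup.isCoatom_map_of_ker_le (QuotientGroup.mk'_surjective V) hker hN
  rw [← hcomap, Subgroup.index_comap_of_surjective _ (QuotientGroup.mk'_surjective V)]
  exact ⟨(hQ.normal_of_isCoatom hmax).comap _, hQ.index_eq_of_isCoatom hmax⟩

end IsPGroup

theorem IsProPGroup.normal_and_index_eq_of_isCoatom {p : ℕ} {G : Type*} [Group G]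
    [TopologicalSpace G] [IsTopologicalGroup G] (hp : p.Prime) (hG : IsProPGroup p G)
    {U : Subgroup G} (hU : IsOpen (U : Set G)) {N : Subgroup U} (hNo : IsOpen (N : Set U))
    (hN : IsCoatom N) : N.Normal ∧ N.index = p := by
  obtain ⟨_, _, _, hidx⟩ := hG
  have : Fact p.Prime := ⟨hp⟩
  have hNG : IsOpen ((N.map U.subtype : Subgroup G) : Set G) := by
    rw [Subgroup.coe_map]
    exact hU.isOpenMap_subtype_val _ hNo
  obtain ⟨V, hV⟩ := ProfiniteGrp.exist_openNormalSubgroup_sub_open_nhds_of_one hNG (one_mem _)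
  have hVN : V.subgroupOf U ≤ N := fun x hx => by
    obtain ⟨y, hy, hyx⟩ := hV hx
    rwa [← Subtype.ext hyx]
  obtain ⟨n, hn⟩ := hidx V V.isNormal' V.isOpen
  obtain ⟨m, -, hm⟩ := (Nat.dvd_prime_pow hp).mp (hn ▸ V.relIndex_dvd_index_of_normal U)
  have hcard : Nat.card (U ⧸ V.subgroupOf U) = p ^ m := (V.subgroupOf U).index_eq_card ▸ hm
  have : Finite (U ⧸ V.subgroupOf U) := Nat.finite_of_card_ne_zero (by simp [hcard, hp.ne_zero])
  exact (IsPGroup.of_card hcard).normal_and_index_eq_of_isCoatom_of_le hVN hN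

section Frattini

variable {G : Type*} [Group G] [TopologicalSpace G]

theorem mem_frattiniOf_iff {H : Subgroup G} {x : H} :
    (x : G) ∈ frattiniOf H ↔ ∀ M : Subgroup H, IsOpen (M : Set H) → IsCoatom M → x ∈ M := by
  change H.subtype x ∈ _ ↔ _
  simp only [frattiniOf, Subgroup.mem_map_iff_mem H.subtype_injective, Subgroup.mem_iInf,
    Set.mem_ofPred_eq]
  exact ⟨fun h M hMo hM => h M ⟨hMo, hM⟩, fun h M hM => h M hM.1 hM.2⟩

theorem frattiniOf_mono {p : ℕ} (hp : p.Prime) {H U : Subgroup G} (hHU : H ≤ U)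
    (hU : ∀ N : Subgroup U, IsOpen (N : Set U) → IsCoatom N → N.Normal ∧ N.index = p) :
    frattiniOf H ≤ frattiniOf U := by
  intro x hx
  obtain ⟨y, -, rfl⟩ := Subgroup.mem_map.mp hx
  change ((Subgroup.inclusion hHU y : U) : G) ∈ frattiniOf U
  rw [mem_frattiniOf_iff]
  intro N hNo hN
  obtain ⟨_, hNp⟩ := hU N hNo hN
  have hdvd : N.relIndex (H.subgroupOf U) ∣ p := hNp ▸ N.relIndex_dvd_index_of_normal _
  rcases hp.eq_one_or_self_of_dvd _ hdvd with h1 | hpr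
  · exact Subgroup.relIndex_eq_one.mp h1 (by simp [Subgroup.mem_subgroupOf])
  · refine (mem_frattiniOf_iff.mp hx) (N.comap (Subgroup.inclusion hHU)) ?_ ?_
    · exact hNo.preimage (continuous_subtype_val.subtype_mk _)
    · apply Subgroup.isCoatom_of_index_prime
      rwa [Subgroup.index_comap, Subgroup.inclusion_range, hpr]

end Frattini

theorem TopFG.of_isOpen {G : Type*} [Group G] [TopologicalSpace G] [IsTopologicalGroup G]
    [CompactSpace G] (hfg : TopFG (⊤ : Subgroup G)) {U : Subgroup G} (hU : IsOpen (U : Set G)) :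
    TopFG U := by
  classical
  obtain ⟨S, hS⟩ := hfg
  set D := Subgroup.closure (S : Set G)
  have hD : Dense (D : Set G) := by
    rw [dense_iff_closure_eq, ← Subgroup.topologicalClosure_coe, hS, Subgroup.coe_top]
  have : Group.FG D := (Group.fg_iff_subgroup_fg D).mpr ⟨S, rfl⟩
  have := U.quotient_finite_of_isOpen hU
  have : U.FiniteIndex := Subgroup.finiteIndex_of_finite_quotient
  obtain ⟨T, hT⟩ := (Group.fg_iff_subgroup_fg (U.subgroupOf D)).mp inferInstance
  refine ⟨T.image Subtype.val, SetLike.ext' ?_⟩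
  have hUD : Subgroup.closure ((T.image Subtype.val : Finset G) : Set G) = U ⊓ D := by
    rw [Finset.coe_image, ← Subgroup.coe_subtype, ← MonoidHom.map_closure, hT,
      Subgroup.subgroupOf_map_subtype]
  rw [Subgroup.topologicalClosure_coe, hUD, Subgroup.coe_inf]
  exact (closure_minimal Set.inter_subset_left (Subgroup.isClosed_of_isOpen U hU)).antisymm
    (hD.open_subset_closure_inter hU)

/-- Every finitely generated Frattini-resistant pro-`p` group is strongly
Frattini-resistant. -/
theorem stmt_11 {p : ℕ} (hp : p.Prime) (G : Type*) [Group G] [TopologicalSpace G]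
    [IsTopologicalGroup G] (hG : IsProPGroup p G) (hfg : TopFG (⊤ : Subgroup G))
    (hFR : FrattiniResistant p G) :
    ∀ H : Subgroup G, IsClosed (H : Set G) → Hierarchical p H (frattiniOf H) := by
  have : CompactSpace G := hG.1
  have : TotallyDisconnectedSpace G := hG.2.2.1
  intro H hH x hx
  have hx_open : ∀ U : Subgroup G, IsOpen (U : Set G) → H ≤ U → x ∈ U := fun U hU hHU =>
    hFR U (U.isClosed_of_isOpen hU) (.of_isOpen hfg hU) x
      (frattiniOf_mono hp hHU (fun _ => hG.normal_and_index_eq_of_isCoatom hp hU) hx)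
  exact (ProfiniteGrp.closedSubgroup_eq_sInf_open ⟨H, hH⟩).ge
    (Subgroup.mem_sInf.mpr fun U hU => hx_open U hU.1 hU.2)
end
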